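/- arXiv:1809.08994 — 5 statements merged into one kernel-verified Lean document; each statement's English description precedes it below -/
import Mathlib

section
/- Let Q > 0, Ω_sr > 0, Ω_sd > 0, Ω_sp > 0 and 0 < a₂ < 1 be real numbers, and set φ = 1/Ω_sr + 1/Ω_sd. Assume Q ≠ φΩ_sp and a₂Q ≠ φΩ_sp. Then (1/2)·∫₀^∞ [log₂(1+Qx) − log₂(1+a₂Qx)] · φΩ_sp/(1+φΩ_sp x)² dx = (1/2)·[ Q·log₂(Q/(φΩ_sp))/(Q − φΩ_sp) − a₂Q·log₂(a₂Q/(φΩ_sp))/(a₂Q − φΩ_sp) ]. -/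
/-!
For `b, c > 0` with `b ≠ c`, integrating by parts and splitting `b / ((1 + b x) (1 + c x))` into
partial fractions shows that
`F x = -log (1 + b x) / (1 + c x) + b / (b - c) * (log (1 + b x) - log (1 + c x))`
is an antiderivative of the nonnegative function `log (1 + b x) * c / (1 + c x) ^ 2` on `[0, ∞)`.
Since `F 0 = 0` and `F x → b log (b / c) / (b - c)` as `x → ∞`, this is the value of the integral
over `(0, ∞)`. The rate is the difference of the cases `b = Q` and `b = a₂ Q`, with `c = φ Ωsp`,
divided by `2 log 2`.
-/

open MeasureTheory Set Filter Topology Real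

noncomputable def logMulDensityAntideriv (b c x : ℝ) : ℝ :=
  -log (1 + b * x) / (1 + c * x) + b / (b - c) * (log (1 + b * x) - log (1 + c * x))

lemma logMulDensityAntideriv_zero (b c : ℝ) : logMulDensityAntideriv b c 0 = 0 := by
  simp [logMulDensityAntideriv]

lemma hasDerivAt_log_one_add_mul (b : ℝ) {x : ℝ} (hx : 0 < 1 + b * x) :
    HasDerivAt (fun x => log (1 + b * x)) (b / (1 + b * x)) x := by
  simpa using (((hasDerivAt_id x).const_mul b).const_add 1).log hx.ne'

lemma hasDerivAt_logMulDensityAntideriv {b c x : ℝ} (hbc : b ≠ c) (hbx : 0 < 1 + b * x)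
    (hcx : 0 < 1 + c * x) :
    HasDerivAt (logMulDensityAntideriv b c) (log (1 + b * x) * (c / (1 + c * x) ^ 2)) x := by
  have hlogb := hasDerivAt_log_one_add_mul b hbx
  have hlogc := hasDerivAt_log_one_add_mul c hcx
  have hden : HasDerivAt (fun x => 1 + c * x) c x := by
    simpa using ((hasDerivAt_id x).const_mul c).const_add 1
  refine ((hlogb.neg.div hden hcx.ne').add ((hlogb.sub hlogc).const_mul (b / (b - c)))).congr_deriv ?_
  have hpartial : b / (b - c) * (b / (1 + b * x) - c / (1 + c * x))
      = b / ((1 + b * x) * (1 + c * x)) := by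
    rw [div_sub_div _ _ hbx.ne' hcx.ne']
    field_simp [sub_ne_zero.mpr hbc]
    ring
  simp only [Pi.neg_apply, hpartial]
  field_simp
  ring

lemma tendsto_log_one_add_mul_div_one_add_mul {b c : ℝ} (hb : 0 < b) (hc : 0 < c) :
    Tendsto (fun x => log (1 + b * x) / (1 + c * x)) atTop (𝓝 0) := by
  have hlin : Tendsto (fun x : ℝ => 1 + b * x) atTop atTop :=
    tendsto_atTop_add_const_left _ _ (tendsto_id.const_mul_atTop hb)
  -- `1 + c x` is an affine function of `y = 1 + b x`
  have hy := (tendsto_pow_log_div_mul_add_atTop (c / b) (1 - c / b) 1 (by positivity)).comp hlin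
  refine hy.congr fun x => ?_
  simp only [Function.comp_apply, pow_one]
  congr 1
  field_simp
  ring

lemma tendsto_log_one_add_mul_sub_log_one_add_mul {b c : ℝ} (hb : 0 < b) (hc : 0 < c) :
    Tendsto (fun x => log (1 + b * x) - log (1 + c * x)) atTop (𝓝 (log (b / c))) := by
  have hratio : Tendsto (fun x : ℝ => (x⁻¹ + b) / (x⁻¹ + c)) atTop (𝓝 (b / c)) := by
    have h := (tendsto_inv_atTop_zero.add_const b).div (tendsto_inv_atTop_zero.add_const c)
      (by rw [zero_add]; exact hc.ne')
    rwa [zero_add, zero_add] at h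
  refine ((continuousAt_log (div_pos hb hc).ne').tendsto.comp hratio).congr' ?_
  filter_upwards [eventually_gt_atTop 0] with x hx
  have hbx : 0 < 1 + b * x := by positivity
  have hcx : 0 < 1 + c * x := by positivity
  rw [Function.comp_apply, ← log_div hbx.ne' hcx.ne']
  congr 1
  field_simp

lemma tendsto_logMulDensityAntideriv {b c : ℝ} (hb : 0 < b) (hc : 0 < c) :
    Tendsto (logMulDensityAntideriv b c) atTop (𝓝 (b * log (b / c) / (b - c))) := by
  have h := ((tendsto_log_one_add_mul_div_one_add_mul hb hc).neg.add
    ((tendsto_log_one_add_mul_sub_log_one_add_mul hb hc).const_mul (b / (b - c))))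
  rw [neg_zero, zero_add, div_mul_eq_mul_div] at h
  exact h.congr fun x => by simp only [logMulDensityAntideriv, neg_div]

lemma hasDerivAt_logMulDensityAntideriv_of_nonneg {b c x : ℝ} (hb : 0 < b) (hc : 0 < c)
    (hbc : b ≠ c) (hx : 0 ≤ x) :
    HasDerivAt (logMulDensityAntideriv b c) (log (1 + b * x) * (c / (1 + c * x) ^ 2)) x :=
  hasDerivAt_logMulDensityAntideriv hbc (by positivity) (by positivity)

lemma log_one_add_mul_mul_density_nonneg {b c x : ℝ} (hb : 0 ≤ b) (hc : 0 ≤ c) (hx : 0 ≤ x) :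
    0 ≤ log (1 + b * x) * (c / (1 + c * x) ^ 2) :=
  mul_nonneg (log_nonneg (by nlinarith)) (by positivity)

lemma integrableOn_log_one_add_mul_mul_density {b c : ℝ} (hb : 0 < b) (hc : 0 < c)
    (hbc : b ≠ c) :
    IntegrableOn (fun x => log (1 + b * x) * (c / (1 + c * x) ^ 2)) (Ioi 0) :=
  integrableOn_Ioi_deriv_of_nonneg
    (hasDerivAt_logMulDensityAntideriv_of_nonneg hb hc hbc le_rfl).continuousAt.continuousWithinAt
    (fun _ hx => hasDerivAt_logMulDensityAntideriv_of_nonneg hb hc hbc (le_of_lt hx))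
    (fun _ hx => log_one_add_mul_mul_density_nonneg hb.le hc.le (le_of_lt hx))
    (tendsto_logMulDensityAntideriv hb hc)

lemma integral_log_one_add_mul_mul_density {b c : ℝ} (hb : 0 < b) (hc : 0 < c) (hbc : b ≠ c) :
    ∫ x in Ioi (0 : ℝ), log (1 + b * x) * (c / (1 + c * x) ^ 2) = b * log (b / c) / (b - c) := by
  rw [integral_Ioi_of_hasDerivAt_of_nonneg
    (hasDerivAt_logMulDensityAntideriv_of_nonneg hb hc hbc le_rfl).continuousAt.continuousWithinAt
    (fun _ hx => hasDerivAt_logMulDensityAntideriv_of_nonneg hb hc hbc (le_of_lt hx))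
    (fun _ hx => log_one_add_mul_mul_density_nonneg hb.le hc.le (le_of_lt hx))
    (tendsto_logMulDensityAntideriv hb hc), logMulDensityAntideriv_zero, sub_zero]

theorem crs_noma_rate_s1_general
    (Q Ωsr Ωsd Ωsp a₂ φ : ℝ)
    (hQ : 0 < Q) (hΩsr : 0 < Ωsr) (hΩsd : 0 < Ωsd) (hΩsp : 0 < Ωsp)
    (ha₂ : 0 < a₂)
    (hφ : φ = 1 / Ωsr + 1 / Ωsd)
    (h1 : Q ≠ φ * Ωsp) (h2 : a₂ * Q ≠ φ * Ωsp) :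
    (1 / 2) * ∫ x in Ioi (0 : ℝ),
        (Real.log (1 + Q * x) / Real.log 2 - Real.log (1 + a₂ * Q * x) / Real.log 2)
          * (φ * Ωsp / (1 + φ * Ωsp * x) ^ 2)
      = (1 / 2) *
          (Q * (Real.log (Q / (φ * Ωsp)) / Real.log 2) / (Q - φ * Ωsp)
            - a₂ * Q * (Real.log (a₂ * Q / (φ * Ωsp)) / Real.log 2) / (a₂ * Q - φ * Ωsp)) := by
  have hc : 0 < φ * Ωsp := by rw [hφ]; positivity
  have hb₂ : 0 < a₂ * Q := by positivity
  simp_rw [sub_mul, div_mul_eq_mul_div _ (Real.log 2)]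
  rw [integral_sub ((integrableOn_log_one_add_mul_mul_density hQ hc h1).div_const _)
      ((integrableOn_log_one_add_mul_mul_density hb₂ hc h2).div_const _),
    integral_div, integral_div, integral_log_one_add_mul_mul_density hQ hc h1,
    integral_log_one_add_mul_mul_density hb₂ hc h2]
  ring

/-- Closed-form average achievable rate for symbol `s₁` in CRS-NOMA spectrum sharing
(Theorem 1 of the paper). -/
theorem crs_noma_rate_s1
    (Q Ωsr Ωsd Ωsp a₂ φ : ℝ)
    (hQ : 0 < Q) (hΩsr : 0 < Ωsr) (hΩsd : 0 < Ωsd) (hΩsp : 0 < Ωsp)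
    (ha₂ : 0 < a₂) (ha₂' : a₂ < 1)
    (hφ : φ = 1 / Ωsr + 1 / Ωsd)
    (h1 : Q ≠ φ * Ωsp) (h2 : a₂ * Q ≠ φ * Ωsp) :
    (1 / 2) * ∫ x in Ioi (0 : ℝ),
        (Real.log (1 + Q * x) / Real.log 2 - Real.log (1 + a₂ * Q * x) / Real.log 2)
          * (φ * Ωsp / (1 + φ * Ωsp * x) ^ 2)
      = (1 / 2) *
          (Q * (Real.log (Q / (φ * Ωsp)) / Real.log 2) / (Q - φ * Ωsp)
            - a₂ * Q * (Real.log (a₂ * Q / (φ * Ωsp)) / Real.log 2) / (a₂ * Q - φ * Ωsp)) :=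
  crs_noma_rate_s1_general Q Ωsr Ωsd Ωsp a₂ φ hQ hΩsr hΩsd hΩsp ha₂ hφ h1 h2
end

section
/- Let Q > 0, Ω_sr > 0, Ω_rd > 0, Ω_sp > 0, Ω_rp > 0 and 0 < a₂ < 1 be real numbers. Assume Ω_rd·Ω_sp ≠ a₂·Ω_rp·Ω_sr, Ω_rd·Q ≠ Ω_rp, and Ω_sp ≠ a₂·Ω_sr·Q. Then the improper integral ∫₀^∞ (1/2)·(1/log 2)·Q·a₂·Ω_sr·Ω_rd / [(a₂Ω_sr + Ω_sp x)(Ω_rd + Ω_rp x)(1+Qx)] dx converges and equals (1/2)·a₂·Ω_rd·Ω_sr·Q / [(Ω_rdΩ_sp − a₂Ω_rpΩ_sr)(Ω_rd Q − Ω_rp)(Ω_sp − a₂Ω_sr Q)] · [ Ω_rpΩ_sp·log₂(a₂Ω_rpΩ_sr/(Ω_rdΩ_sp)) + a₂Ω_rpΩ_sr Q·log₂(Ω_rd Q/Ω_rp) − Ω_rdΩ_sp Q·log₂(a₂Ω_sr Q/Ω_sp) ]. -/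
/-!
Partial fractions write `1 / ((a + b x)(c + d x)(e + f x))` as `∑ wᵢ bᵢ / (aᵢ + bᵢ x)`, so
`∑ wᵢ log (aᵢ + bᵢ x)` is a primitive. Since the integrand is `O(x⁻²)`, `∑ wᵢ = 0`; hence the
`log x` growth of the three logarithms cancels and the primitive tends to `∑ wᵢ log bᵢ` at
infinity. The integral over `(0, ∞)` is therefore `∑ wᵢ log (bᵢ / aᵢ)`, and the closed form is
this sum for the factors `a₂ Ωsr + Ωsp x`, `Ωrd + Ωrp x`, `1 + Q x`.
-/

open MeasureTheory Set Filter Topology Real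

lemma tendsto_log_add_mul_sub_log_atTop (a : ℝ) {b : ℝ} (hb : 0 < b) :
    Tendsto (fun x => log (a + b * x) - log x) atTop (𝓝 (log b)) := by
  have hlim := (tendsto_log_comp_add_sub_log (a / b)).const_add (log b)
  rw [add_zero] at hlim
  refine hlim.congr' ?_
  filter_upwards [eventually_gt_atTop (-(a / b))] with x hx
  have hfactor : a + b * x = b * (x + a / b) := by field_simp; ring
  rw [hfactor, log_mul hb.ne' (by linarith)]
  ring

section LogCombination

variable {ι : Type*} (s : Finset ι) (w a b : ι → ℝ)

lemma tendsto_sum_mul_log_add_mul_atTop (hb : ∀ i ∈ s, 0 < b i) (hw : ∑ i ∈ s, w i = 0) :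
    Tendsto (fun x => ∑ i ∈ s, w i * log (a i + b i * x)) atTop
      (𝓝 (∑ i ∈ s, w i * log (b i))) := by
  have hlim := tendsto_finsetSum s fun i hi =>
    (tendsto_log_add_mul_sub_log_atTop (a i) (hb i hi)).const_mul (w i)
  refine hlim.congr fun x => ?_
  have hlog : ∑ i ∈ s, w i * log x = 0 := by rw [← Finset.sum_mul, hw, zero_mul]
  simp only [mul_sub, Finset.sum_sub_distrib, hlog, sub_zero]

lemma hasDerivAt_sum_mul_log_add_mul {x : ℝ} (hx : ∀ i ∈ s, a i + b i * x ≠ 0) :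
    HasDerivAt (fun y => ∑ i ∈ s, w i * log (a i + b i * y))
      (∑ i ∈ s, w i * (b i / (a i + b i * x))) x := by
  refine HasDerivAt.fun_sum fun i hi => ?_
  have hlin : HasDerivAt (fun y => a i + b i * y) (b i) x := by
    simpa using ((hasDerivAt_id x).const_mul (b i)).const_add (a i)
  exact (hlin.log (hx i hi)).const_mul (w i)

lemma integrableOn_Ioi_and_integral_eq_sum_mul_log {f : ℝ → ℝ}
    (ha : ∀ i ∈ s, 0 < a i) (hb : ∀ i ∈ s, 0 < b i) (hw : ∑ i ∈ s, w i = 0)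
    (hf : EqOn f (fun x => ∑ i ∈ s, w i * (b i / (a i + b i * x))) (Ioi 0))
    (hf_nonneg : ∀ x ∈ Ioi (0 : ℝ), 0 ≤ f x) :
    IntegrableOn f (Ioi 0) ∧ ∫ x in Ioi 0, f x = ∑ i ∈ s, w i * (log (b i) - log (a i)) := by
  set F := fun y => ∑ i ∈ s, w i * log (a i + b i * y)
  have hderiv : ∀ x ∈ Ioi (0 : ℝ), HasDerivAt F (f x) x := fun x hx => by
    rw [hf hx]
    refine hasDerivAt_sum_mul_log_add_mul s w a b fun i hi => ?_
    have := mul_pos (hb i hi) (mem_Ioi.mp hx)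
    linarith [ha i hi]
  have hcont : ContinuousWithinAt F (Ici 0) 0 :=
    (hasDerivAt_sum_mul_log_add_mul s w a b (x := 0) fun i hi => by
      simpa using (ha i hi).ne').continuousAt.continuousWithinAt
  have hlim := tendsto_sum_mul_log_add_mul_atTop s w a b hb hw
  refine ⟨integrableOn_Ioi_deriv_of_nonneg hcont hderiv hf_nonneg hlim, ?_⟩
  rw [integral_Ioi_of_hasDerivAt_of_nonneg hcont hderiv hf_nonneg hlim]
  simp only [F, mul_zero, add_zero, mul_sub, Finset.sum_sub_distrib]

end LogCombination

section ThreeLinearFactors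

variable {a b c d e f : ℝ}

/- The weight of the `i`-th factor is `bᵢ / ∏_{j ≠ i} (aⱼ bᵢ - aᵢ bⱼ)`, from the residue at
`x = -aᵢ / bᵢ`. Here and below the determinants are `set` as atoms so that `field_simp`
leaves a polynomial identity. -/
lemma one_div_mul_mul_eq_partial_fractions {x : ℝ} (hx₁ : a + b * x ≠ 0)
    (hx₂ : c + d * x ≠ 0) (hx₃ : e + f * x ≠ 0) (h₁₂ : c * b - a * d ≠ 0)
    (h₁₃ : e * b - a * f ≠ 0) (h₃₂ : c * f - e * d ≠ 0) :
    1 / ((a + b * x) * (c + d * x) * (e + f * x))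
      = b / ((c * b - a * d) * (e * b - a * f)) * (b / (a + b * x))
        + d / ((c * b - a * d) * (c * f - e * d)) * (d / (c + d * x))
        - f / ((e * b - a * f) * (c * f - e * d)) * (f / (e + f * x)) := by
  set L₁ := a + b * x with hL₁
  set L₂ := c + d * x with hL₂
  set L₃ := e + f * x with hL₃
  set D₁₂ := c * b - a * d with hD₁₂
  set D₁₃ := e * b - a * f with hD₁₃
  set D₃₂ := c * f - e * d with hD₃₂
  field_simp
  rw [hL₁, hL₂, hL₃, hD₁₂, hD₁₃, hD₃₂]
  ring

lemma integrableOn_Ioi_and_integral_one_div_mul_mul (ha : 0 < a) (hb : 0 < b) (hc : 0 < c)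
    (hd : 0 < d) (he : 0 < e) (hf : 0 < f) (h₁₂ : c * b - a * d ≠ 0)
    (h₁₃ : e * b - a * f ≠ 0) (h₃₂ : c * f - e * d ≠ 0) :
    IntegrableOn (fun x => 1 / ((a + b * x) * (c + d * x) * (e + f * x))) (Ioi 0) ∧
      ∫ x in Ioi 0, 1 / ((a + b * x) * (c + d * x) * (e + f * x))
        = b / ((c * b - a * d) * (e * b - a * f)) * (log b - log a)
          + d / ((c * b - a * d) * (c * f - e * d)) * (log d - log c)
          - f / ((e * b - a * f) * (c * f - e * d)) * (log f - log e) := by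
  have hw : b / ((c * b - a * d) * (e * b - a * f)) + d / ((c * b - a * d) * (c * f - e * d))
      + -(f / ((e * b - a * f) * (c * f - e * d))) = 0 := by
    set D₁₂ := c * b - a * d with hD₁₂
    set D₁₃ := e * b - a * f with hD₁₃
    set D₃₂ := c * f - e * d with hD₃₂
    field_simp
    rw [hD₁₂, hD₁₃, hD₃₂]
    ring
  have key := integrableOn_Ioi_and_integral_eq_sum_mul_log Finset.univ
    ![b / ((c * b - a * d) * (e * b - a * f)), d / ((c * b - a * d) * (c * f - e * d)),
      -(f / ((e * b - a * f) * (c * f - e * d)))] ![a, c, e] ![b, d, f]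
    (f := fun x => 1 / ((a + b * x) * (c + d * x) * (e + f * x)))
    (by simp [Fin.forall_fin_succ, ha, hc, he]) (by simp [Fin.forall_fin_succ, hb, hd, hf])
    (by simpa [Fin.sum_univ_three] using hw)
    (fun x hx => by
      have hx : 0 < x := hx
      simpa [Fin.sum_univ_three, sub_eq_add_neg] using
        one_div_mul_mul_eq_partial_fractions (by positivity) (by positivity) (by positivity)
          h₁₂ h₁₃ h₃₂)
    (fun x hx => by have hx : 0 < x := hx; positivity)
  simpa [Fin.sum_univ_three, sub_eq_add_neg] using key

end ThreeLinearFactors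

theorem crs_noma_rate_s2_general
    (Q Ωsr Ωrd Ωsp Ωrp a₂ : ℝ)
    (hQ : 0 < Q) (hΩsr : 0 < Ωsr) (hΩrd : 0 < Ωrd) (hΩsp : 0 < Ωsp) (hΩrp : 0 < Ωrp)
    (ha₂ : 0 < a₂)
    (h1 : Ωrd * Ωsp ≠ a₂ * Ωrp * Ωsr) (h2 : Ωrd * Q ≠ Ωrp) (h3 : Ωsp ≠ a₂ * Ωsr * Q) :
    IntegrableOn
        (fun x : ℝ => (1 / 2) * (1 / Real.log 2) * Q * a₂ * Ωsr * Ωrd /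
          ((a₂ * Ωsr + Ωsp * x) * (Ωrd + Ωrp * x) * (1 + Q * x)))
        (Ioi 0) volume ∧
      ∫ x in Ioi (0 : ℝ),
          (1 / 2) * (1 / Real.log 2) * Q * a₂ * Ωsr * Ωrd /
            ((a₂ * Ωsr + Ωsp * x) * (Ωrd + Ωrp * x) * (1 + Q * x))
        = (1 / 2) * a₂ * Ωrd * Ωsr * Q /
            ((Ωrd * Ωsp - a₂ * Ωrp * Ωsr) * (Ωrd * Q - Ωrp) * (Ωsp - a₂ * Ωsr * Q)) *
            (Ωrp * Ωsp * (Real.log (a₂ * Ωrp * Ωsr / (Ωrd * Ωsp)) / Real.log 2)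
              + a₂ * Ωrp * Ωsr * Q * (Real.log (Ωrd * Q / Ωrp) / Real.log 2)
              - Ωrd * Ωsp * Q * (Real.log (a₂ * Ωsr * Q / Ωsp) / Real.log 2)) := by
  have hD₁₂ : Ωrd * Ωsp - a₂ * Ωrp * Ωsr ≠ 0 := sub_ne_zero.mpr h1
  have hD₁₃ : Ωsp - a₂ * Ωsr * Q ≠ 0 := sub_ne_zero.mpr h3
  have hD₃₂ : Ωrd * Q - Ωrp ≠ 0 := sub_ne_zero.mpr h2
  obtain ⟨hint, hval⟩ := integrableOn_Ioi_and_integral_one_div_mul_mul (mul_pos ha₂ hΩsr)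
    hΩsp hΩrd hΩrp one_pos hQ (by rwa [mul_right_comm a₂]) (by rwa [one_mul])
    (by rwa [one_mul])
  simp_rw [div_eq_mul_one_div ((1 / 2) * (1 / Real.log 2) * Q * a₂ * Ωsr * Ωrd)]
  refine ⟨hint.const_mul _, ?_⟩
  have hlog₁ : log (a₂ * Ωrp * Ωsr / (Ωrd * Ωsp))
      = (log Ωrp - log Ωrd) - (log Ωsp - log (a₂ * Ωsr)) := by
    rw [show a₂ * Ωrp * Ωsr / (Ωrd * Ωsp) = (Ωrp / Ωrd) / (Ωsp / (a₂ * Ωsr)) by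
      field_simp, log_div (by positivity) (by positivity), log_div hΩrp.ne' hΩrd.ne',
      log_div hΩsp.ne' (by positivity)]
  have hlog₂ : log (Ωrd * Q / Ωrp) = log Q - (log Ωrp - log Ωrd) := by
    rw [log_div (by positivity) hΩrp.ne', log_mul hΩrd.ne' hQ.ne']; ring
  have hlog₃ : log (a₂ * Ωsr * Q / Ωsp) = log Q - (log Ωsp - log (a₂ * Ωsr)) := by
    rw [log_div (by positivity) hΩsp.ne', log_mul (by positivity) hQ.ne']; ring
  have hlog2 : log 2 ≠ 0 := (log_pos one_lt_two).ne'
  rw [integral_const_mul, hval, hlog₁, hlog₂, hlog₃]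
  simp only [one_mul, log_one, sub_zero, mul_right_comm a₂ Ωsr Ωrp]
  set D₁₂ := Ωrd * Ωsp - a₂ * Ωrp * Ωsr with hD₁₂_def
  set D₁₃ := Ωsp - a₂ * Ωsr * Q with hD₁₃_def
  set D₃₂ := Ωrd * Q - Ωrp with hD₃₂_def
  field_simp
  rw [hD₁₂_def, hD₁₃_def, hD₃₂_def]
  ring

/-- Closed-form average achievable rate for symbol `s₂` in CRS-NOMA spectrum sharing
(Theorem 2 of the paper): the integral converges and equals the closed form. -/
theorem crs_noma_rate_s2
    (Q Ωsr Ωrd Ωsp Ωrp a₂ : ℝ)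
    (hQ : 0 < Q) (hΩsr : 0 < Ωsr) (hΩrd : 0 < Ωrd) (hΩsp : 0 < Ωsp) (hΩrp : 0 < Ωrp)
    (ha₂ : 0 < a₂) (ha₂' : a₂ < 1)
    (h1 : Ωrd * Ωsp ≠ a₂ * Ωrp * Ωsr) (h2 : Ωrd * Q ≠ Ωrp) (h3 : Ωsp ≠ a₂ * Ωsr * Q) :
    IntegrableOn
        (fun x : ℝ => (1 / 2) * (1 / Real.log 2) * Q * a₂ * Ωsr * Ωrd /
          ((a₂ * Ωsr + Ωsp * x) * (Ωrd + Ωrp * x) * (1 + Q * x)))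
        (Ioi 0) volume ∧
      ∫ x in Ioi (0 : ℝ),
          (1 / 2) * (1 / Real.log 2) * Q * a₂ * Ωsr * Ωrd /
            ((a₂ * Ωsr + Ωsp * x) * (Ωrd + Ωrp * x) * (1 + Q * x))
        = (1 / 2) * a₂ * Ωrd * Ωsr * Q /
            ((Ωrd * Ωsp - a₂ * Ωrp * Ωsr) * (Ωrd * Q - Ωrp) * (Ωsp - a₂ * Ωsr * Q)) *
            (Ωrp * Ωsp * (Real.log (a₂ * Ωrp * Ωsr / (Ωrd * Ωsp)) / Real.log 2)
              + a₂ * Ωrp * Ωsr * Q * (Real.log (Ωrd * Q / Ωrp) / Real.log 2)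
              - Ωrd * Ωsp * Q * (Real.log (a₂ * Ωsr * Q / Ωsp) / Real.log 2)) :=
  crs_noma_rate_s2_general Q Ωsr Ωrd Ωsp Ωrp a₂ hQ hΩsr hΩrd hΩsp hΩrp ha₂ h1 h2 h3
end

section
/- Let N_r, N_d ≥ 1 be integers, let Q > 0, Ω_sr > 0, Ω_sd > 0, Ω_sp > 0 and 0 < a₂ < 1 be real numbers, and for 1 ≤ k ≤ N_r, 1 ≤ j ≤ N_d set ξ_{k,j} = k/Ω_sr + j/Ω_sd. Assume Q ≠ ξ_{k,j}Ω_sp and a₂Q ≠ ξ_{k,j}Ω_sp for all such k, j. Define f_𝒳(x) = Σ_{k=1}^{N_r} Σ_{j=1}^{N_d} (−1)^{k+j} C(N_r,k) C(N_d,j) · ξ_{k,j}Ω_sp/(1 + ξ_{k,j}Ω_sp x)² for x ≥ 0. Then (1/2)·∫₀^∞ [log₂(1+Qx) − log₂(1+a₂Qx)]·f_𝒳(x) dx = (1/2)·Σ_{k=1}^{N_r} Σ_{j=1}^{N_d} (−1)^{k+j} C(N_r,k) C(N_d,j) · [ Q·log₂(Q/(ξ_{k,j}Ω_sp))/(Q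 − ξ_{k,j}Ω_sp) − a₂Q·log₂(a₂Q/(ξ_{k,j}Ω_sp))/(a₂Q − ξ_{k,j}Ω_sp) ]. -/
/-!
Against the kernel `c / (1 + c x)²`, integration by parts and the partial fraction
`p / ((1 + p x) (1 + c x)) = p / (p - c) · (p / (1 + p x) - c / (1 + c x))` give an explicit
primitive of `log (1 + p x) · c / (1 + c x)²`. It vanishes at `0` and tends to
`p log (p / c) / (p - c)` at infinity, and the integrand is nonnegative, so
`∫₀^∞ log (1 + p x) · c / (1 + c x)² dx = p log (p / c) / (p - c)`. The density `f` is a finite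
signed combination of such kernels with `c = ξ k j · Ωsp`, so the rate is the same combination of
these closed forms, once for `p = Q` and once for `p = a₂ Q`.
-/

open MeasureTheory Set Filter Real Topology

section

variable {p q c : ℝ}

lemma tendsto_one_add_mul_div_one_add_mul_atTop (p : ℝ) (hc : c ≠ 0) :
    Tendsto (fun x : ℝ => (1 + p * x) / (1 + c * x)) atTop (𝓝 (p / c)) := by
  have h : Tendsto (fun x : ℝ => (x⁻¹ + p) / (x⁻¹ + c)) atTop (𝓝 ((0 + p) / (0 + c))) :=
    (tendsto_inv_atTop_zero.add_const p).div (tendsto_inv_atTop_zero.add_const c)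
      (by simpa using hc)
  rw [zero_add, zero_add] at h
  refine h.congr' ?_
  filter_upwards [eventually_gt_atTop 0] with x hx
  field_simp

lemma tendsto_log_one_add_mul_div_one_add_mul_atTop (hp : 0 < p) (hc : c ≠ 0) :
    Tendsto (fun x : ℝ => log (1 + p * x) / (1 + c * x)) atTop (𝓝 0) := by
  have hlog : Tendsto (fun x : ℝ => log (1 + p * x) / (1 + p * x)) atTop (𝓝 0) :=
    isLittleO_log_id_atTop.tendsto_div_nhds_zero.comp
      (tendsto_atTop_add_const_left _ 1 (tendsto_id.const_mul_atTop hp))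
  have h := hlog.mul (tendsto_one_add_mul_div_one_add_mul_atTop p hc)
  rw [zero_mul] at h
  refine h.congr' ?_
  filter_upwards [eventually_gt_atTop 0] with x hx
  have : 1 + p * x ≠ 0 := by positivity
  field_simp

noncomputable def logKernelPrimitive (p c x : ℝ) : ℝ :=
  -log (1 + p * x) / (1 + c * x) + p / (p - c) * (log (1 + p * x) - log (1 + c * x))

lemma hasDerivAt_logKernelPrimitive {x : ℝ} (hpc : p ≠ c) (hpx : 1 + p * x ≠ 0)
    (hcx : 1 + c * x ≠ 0) :
    HasDerivAt (logKernelPrimitive p c) (log (1 + p * x) * (c / (1 + c * x) ^ 2)) x := by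
  have hlinp : HasDerivAt (fun y => 1 + p * y) p x := by
    simpa using ((hasDerivAt_id x).const_mul p).const_add 1
  have hlinc : HasDerivAt (fun y => 1 + c * y) c x := by
    simpa using ((hasDerivAt_id x).const_mul c).const_add 1
  have hlogp := hlinp.log hpx
  have hlogc := hlinc.log hcx
  refine ((hlogp.neg.div hlinc hcx).add
    ((hlogp.sub hlogc).const_mul (p / (p - c)))).congr_deriv ?_
  have : p - c ≠ 0 := sub_ne_zero.mpr hpc
  rw [Pi.neg_apply, div_sub_div _ _ hpx hcx]
  field_simp
  ring

lemma tendsto_logKernelPrimitive_atTop (hp : 0 < p) (hc : 0 < c) :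
    Tendsto (logKernelPrimitive p c) atTop (𝓝 (p * log (p / c) / (p - c))) := by
  have hdiff : Tendsto (fun x => log (1 + p * x) - log (1 + c * x)) atTop (𝓝 (log (p / c))) := by
    refine ((continuousAt_log (div_pos hp hc).ne').tendsto.comp
      (tendsto_one_add_mul_div_one_add_mul_atTop p hc.ne')).congr' ?_
    filter_upwards [eventually_gt_atTop 0] with x hx
    exact log_div (by positivity) (by positivity)
  have h := (tendsto_log_one_add_mul_div_one_add_mul_atTop hp hc.ne').neg.add
    (hdiff.const_mul (p / (p - c)))
  rw [neg_zero, zero_add, div_mul_eq_mul_div] at h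
  refine h.congr fun x => ?_
  rw [logKernelPrimitive, neg_div]

lemma log_one_add_mul_mul_div_sq_nonneg {x : ℝ} (hp : 0 ≤ p) (hc : 0 ≤ c) (hx : 0 ≤ x) :
    0 ≤ log (1 + p * x) * (c / (1 + c * x) ^ 2) :=
  mul_nonneg (log_nonneg (by nlinarith)) (by positivity)

lemma integrableOn_log_one_add_mul_mul_div_sq (hp : 0 < p) (hc : 0 < c) (hpc : p ≠ c) :
    IntegrableOn (fun x => log (1 + p * x) * (c / (1 + c * x) ^ 2)) (Ioi 0) :=
  integrableOn_Ioi_deriv_of_nonneg'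
    (fun x (hx : 0 ≤ x) => hasDerivAt_logKernelPrimitive hpc (by positivity) (by positivity))
    (fun _ hx => log_one_add_mul_mul_div_sq_nonneg hp.le hc.le (le_of_lt hx))
    (tendsto_logKernelPrimitive_atTop hp hc)

lemma integral_log_one_add_mul_mul_div_sq (hp : 0 < p) (hc : 0 < c) (hpc : p ≠ c) :
    ∫ x in Ioi 0, log (1 + p * x) * (c / (1 + c * x) ^ 2) = p * log (p / c) / (p - c) := by
  rw [integral_Ioi_of_hasDerivAt_of_nonneg'
    (fun x (hx : 0 ≤ x) => hasDerivAt_logKernelPrimitive hpc (by positivity) (by positivity))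
    (fun _ hx => log_one_add_mul_mul_div_sq_nonneg hp.le hc.le (le_of_lt hx))
    (tendsto_logKernelPrimitive_atTop hp hc)]
  simp [logKernelPrimitive]

lemma integrableOn_logb_sub_logb_mul_div_sq (b : ℝ) (hp : 0 < p) (hq : 0 < q) (hc : 0 < c)
    (hpc : p ≠ c) (hqc : q ≠ c) :
    IntegrableOn (fun x => (logb b (1 + p * x) - logb b (1 + q * x)) * (c / (1 + c * x) ^ 2))
      (Ioi 0) := by
  refine IntegrableOn.congr_fun (((integrableOn_log_one_add_mul_mul_div_sq hp hc hpc).sub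
    (integrableOn_log_one_add_mul_mul_div_sq hq hc hqc)).div_const (log b))
      (fun x _ => ?_) measurableSet_Ioi
  simp only [logb, Pi.sub_apply]
  ring

lemma integral_logb_sub_logb_mul_div_sq (b : ℝ) (hp : 0 < p) (hq : 0 < q) (hc : 0 < c)
    (hpc : p ≠ c) (hqc : q ≠ c) :
    ∫ x in Ioi 0, (logb b (1 + p * x) - logb b (1 + q * x)) * (c / (1 + c * x) ^ 2)
      = p * logb b (p / c) / (p - c) - q * logb b (q / c) / (q - c) := by
  have h : ∀ x, (logb b (1 + p * x) - logb b (1 + q * x)) * (c / (1 + c * x) ^ 2)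
      = (log (1 + p * x) * (c / (1 + c * x) ^ 2) - log (1 + q * x) * (c / (1 + c * x) ^ 2))
        / log b := fun x => by
    simp only [logb]
    ring
  simp_rw [h]
  rw [integral_div, integral_sub (integrableOn_log_one_add_mul_mul_div_sq hp hc hpc)
    (integrableOn_log_one_add_mul_mul_div_sq hq hc hqc),
    integral_log_one_add_mul_mul_div_sq hp hc hpc, integral_log_one_add_mul_mul_div_sq hq hc hqc]
  simp only [logb]
  ring

end

theorem crs_noma_rate_s1_SC_general
    (Nr Nd : ℕ)
    (Q Ωsr Ωsd Ωsp a₂ : ℝ)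
    (hQ : 0 < Q) (hΩsr : 0 < Ωsr) (hΩsd : 0 < Ωsd) (hΩsp : 0 < Ωsp)
    (ha₂ : 0 < a₂)
    (ξ : ℕ → ℕ → ℝ) (hξ : ∀ k j, ξ k j = (k : ℝ) / Ωsr + (j : ℝ) / Ωsd)
    (h1 : ∀ k ∈ Finset.Icc 1 Nr, ∀ j ∈ Finset.Icc 1 Nd, Q ≠ ξ k j * Ωsp)
    (h2 : ∀ k ∈ Finset.Icc 1 Nr, ∀ j ∈ Finset.Icc 1 Nd, a₂ * Q ≠ ξ k j * Ωsp)
    (f : ℝ → ℝ)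
    (hf : ∀ x, 0 ≤ x → f x =
      ∑ k ∈ Finset.Icc 1 Nr, ∑ j ∈ Finset.Icc 1 Nd,
        (-1 : ℝ) ^ (k + j) * (Nr.choose k : ℝ) * (Nd.choose j : ℝ) *
          (ξ k j * Ωsp / (1 + ξ k j * Ωsp * x) ^ 2)) :
    (1 / 2) * ∫ x in Ioi (0 : ℝ),
        (Real.log (1 + Q * x) / Real.log 2 - Real.log (1 + a₂ * Q * x) / Real.log 2) * f x
      = (1 / 2) *
          ∑ k ∈ Finset.Icc 1 Nr, ∑ j ∈ Finset.Icc 1 Nd,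
            (-1 : ℝ) ^ (k + j) * (Nr.choose k : ℝ) * (Nd.choose j : ℝ) *
              (Q * (Real.log (Q / (ξ k j * Ωsp)) / Real.log 2) / (Q - ξ k j * Ωsp)
                - a₂ * Q * (Real.log (a₂ * Q / (ξ k j * Ωsp)) / Real.log 2)
                    / (a₂ * Q - ξ k j * Ωsp)) := by
  have hc : ∀ k ∈ Finset.Icc 1 Nr, ∀ j ∈ Finset.Icc 1 Nd, 0 < ξ k j * Ωsp := by
    intro k hk j hj
    have hk : (0 : ℝ) < k := by exact_mod_cast (Finset.mem_Icc.mp hk).1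
    have hj : (0 : ℝ) < j := by exact_mod_cast (Finset.mem_Icc.mp hj).1
    rw [hξ]
    positivity
  have haQ : 0 < a₂ * Q := mul_pos ha₂ hQ
  set g : ℝ → ℝ → ℝ := fun c x =>
    (logb 2 (1 + Q * x) - logb 2 (1 + a₂ * Q * x)) * (c / (1 + c * x) ^ 2)
  have hint : ∀ k ∈ Finset.Icc 1 Nr, ∀ j ∈ Finset.Icc 1 Nd,
      IntegrableOn (g (ξ k j * Ωsp)) (Ioi 0) := fun k hk j hj =>
    integrableOn_logb_sub_logb_mul_div_sq 2 hQ haQ (hc k hk j hj) (h1 k hk j hj) (h2 k hk j hj)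
  have hexpand : ∀ x ∈ Ioi (0 : ℝ),
      (log (1 + Q * x) / log 2 - log (1 + a₂ * Q * x) / log 2) * f x
        = ∑ k ∈ Finset.Icc 1 Nr, ∑ j ∈ Finset.Icc 1 Nd,
            (-1 : ℝ) ^ (k + j) * (Nr.choose k : ℝ) * (Nd.choose j : ℝ) * g (ξ k j * Ωsp) x := by
    intro x hx
    simp only [hf x (le_of_lt hx), Finset.mul_sum, g, logb]
    exact Finset.sum_congr rfl fun k _ => Finset.sum_congr rfl fun j _ => by ring
  rw [setIntegral_congr_fun measurableSet_Ioi hexpand, integral_finsetSum _ fun k hk =>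
    integrable_finsetSum _ fun j hj => (hint k hk j hj).const_mul _]
  refine congrArg _ (Finset.sum_congr rfl fun k hk => ?_)
  rw [integral_finsetSum _ fun j hj => (hint k hk j hj).const_mul _]
  refine Finset.sum_congr rfl fun j hj => ?_
  rw [integral_const_mul, integral_logb_sub_logb_mul_div_sq 2 hQ haQ (hc k hk j hj)
    (h1 k hk j hj) (h2 k hk j hj)]
  rfl

/-- Closed-form average achievable rate for symbol `s₁` with selection combining
(Theorem 3 of the paper). -/
theorem crs_noma_rate_s1_SC
    (Nr Nd : ℕ) (hNr : 1 ≤ Nr) (hNd : 1 ≤ Nd)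
    (Q Ωsr Ωsd Ωsp a₂ : ℝ)
    (hQ : 0 < Q) (hΩsr : 0 < Ωsr) (hΩsd : 0 < Ωsd) (hΩsp : 0 < Ωsp)
    (ha₂ : 0 < a₂) (ha₂' : a₂ < 1)
    (ξ : ℕ → ℕ → ℝ) (hξ : ∀ k j, ξ k j = (k : ℝ) / Ωsr + (j : ℝ) / Ωsd)
    (h1 : ∀ k ∈ Finset.Icc 1 Nr, ∀ j ∈ Finset.Icc 1 Nd, Q ≠ ξ k j * Ωsp)
    (h2 : ∀ k ∈ Finset.Icc 1 Nr, ∀ j ∈ Finset.Icc 1 Nd, a₂ * Q ≠ ξ k j * Ωsp)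
    (f : ℝ → ℝ)
    (hf : ∀ x, 0 ≤ x → f x =
      ∑ k ∈ Finset.Icc 1 Nr, ∑ j ∈ Finset.Icc 1 Nd,
        (-1 : ℝ) ^ (k + j) * (Nr.choose k : ℝ) * (Nd.choose j : ℝ) *
          (ξ k j * Ωsp / (1 + ξ k j * Ωsp * x) ^ 2)) :
    (1 / 2) * ∫ x in Ioi (0 : ℝ),
        (Real.log (1 + Q * x) / Real.log 2 - Real.log (1 + a₂ * Q * x) / Real.log 2) * f x
      = (1 / 2) *
          ∑ k ∈ Finset.Icc 1 Nr, ∑ j ∈ Finset.Icc 1 Nd,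
            (-1 : ℝ) ^ (k + j) * (Nr.choose k : ℝ) * (Nd.choose j : ℝ) *
              (Q * (Real.log (Q / (ξ k j * Ωsp)) / Real.log 2) / (Q - ξ k j * Ωsp)
                - a₂ * Q * (Real.log (a₂ * Q / (ξ k j * Ωsp)) / Real.log 2)
                    / (a₂ * Q - ξ k j * Ωsp)) :=
  crs_noma_rate_s1_SC_general Nr Nd Q Ωsr Ωsd Ωsp a₂ hQ hΩsr hΩsd hΩsp ha₂ ξ hξ h1 h2 f hf
end

section
/- Let N_r, N_d ≥ 1 be integers, let Q > 0, Ω_sr > 0, Ω_rd > 0, Ω_sp > 0, Ω_rp > 0 and 0 < a₂ < 1 be real numbers. Assume for all 1 ≤ k ≤ N_r and 1 ≤ j ≤ N_d that a₂Ω_sr Q ≠ kΩ_sp, Ω_rd Q ≠ jΩ_rp, and kΩ_rdΩ_sp ≠ j a₂Ω_rpΩ_sr. Define S(x) = 1 − Σ_{k=1}^{N_r}(−1)^{k−1}C(N_r,k)·kΩ_sp x/(a₂Ω_sr + kΩ_sp x) − Σ_{j=1}^{N_d}(−1)^{j−1}C(N_d,j)·jΩ_rp x/(Ω_rd + jΩ_rp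 x) + Σ_{k=1}^{N_r}Σ_{j=1}^{N_d}(−1)^{k+j}C(N_r,k)C(N_d,j)·kjΩ_spΩ_rp x²/[(a₂Ω_sr + kΩ_sp x)(Ω_rd + jΩ_rp x)]. Then (1/2)·(1/log 2)·Q·∫₀^∞ S(x)/(1+Qx) dx = (1/2)·Q·[ Σ_{k=1}^{N_r}(−1)^{k−1}C(N_r,k)·a₂Ω_sr·log₂(a₂Ω_sr Q/(kΩ_sp))/(a₂Ω_sr Q − kΩ_sp) + Σ_{j=1}^{N_d}(−1)^{j−1}C(N_d,j)·Ω_rd·log₂(Ω_rd Q/(jΩ_rp))/(Ω_rd Q − jΩ_rp) + Σ_{k=1}^{N_r}Σ_{j=1}^{N_d}(−1)^{k+j}C(N_r,k)C(N_d,j)·( kΩ_rd²Ω_sp·log₂(jΩ_rp/(QΩ_rd))/[(kΩ_rdΩ_sp − j a₂Ω_rpΩ_sr)(QΩ_rd − jΩ_rp)] + j a₂²Ω_rpΩ_sr²·log₂(a₂QΩ_sr/(kΩ_sp))/[(kΩ_rdΩ_sp − j a₂Ω_rpΩ_sr)(a₂QΩ_sr − kΩ_sp)] ) ]. -/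
/-!
The inclusion-exclusion weights `(-1)^(k-1) C(n,k)` sum to `1`, so `1 - Σ c_k u_k = Σ c_k (1 - u_k)`
and the survival function factors as `S x = (Σ_k c_k / (1 + p_k x)) (Σ_j d_j / (1 + q_j x))` with
`p_k = k Ωsp / (a₂ Ωsr)` and `q_j = j Ωrp / Ωrd`. Hence `S x / (1 + Q x)` is a finite combination of
`1 / ((1 + Q x)(1 + p x)(1 + q x))`, which partial fractions reduce to
`∫₀^∞ dx / ((1 + a x)(1 + b x)) = log (a / b) / (a - b)`, the antiderivative being
`log ((1 + a x) / (1 + b x)) / (a - b)`. Summing the weights to `1` once more collapses the double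
sums of the terms that depend on `k` or on `j` alone.
-/

open MeasureTheory Set Filter Topology

section TwoFactor

variable {a b : ℝ}

lemma tendsto_one_add_mul_div_one_add_mul (hb : b ≠ 0) :
    Tendsto (fun x : ℝ => (1 + a * x) / (1 + b * x)) atTop (𝓝 (a / b)) := by
  have h : Tendsto (fun x : ℝ => (x⁻¹ + a) / (x⁻¹ + b)) atTop (𝓝 ((0 + a) / (0 + b))) :=
    (tendsto_inv_atTop_zero.add_const a).div (tendsto_inv_atTop_zero.add_const b) (by simpa)
  rw [zero_add, zero_add] at h
  refine h.congr' ?_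
  filter_upwards [eventually_gt_atTop 0] with x hx
  rw [← mul_div_mul_left _ _ hx.ne']
  field_simp

lemma hasDerivAt_log_div_one_add_mul (ha : 0 ≤ a) (hb : 0 ≤ b) (hab : a ≠ b) {x : ℝ}
    (hx : 0 ≤ x) :
    HasDerivAt (fun x => Real.log ((1 + a * x) / (1 + b * x)) / (a - b))
      (1 / ((1 + a * x) * (1 + b * x))) x := by
  have hax : 0 < 1 + a * x := by positivity
  have hbx : 0 < 1 + b * x := by positivity
  have hlin : ∀ c : ℝ, HasDerivAt (fun x => 1 + c * x) c x := fun c => by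
    simpa using ((hasDerivAt_id x).const_mul c).const_add 1
  refine ((((hlin a).div (hlin b) hbx.ne').log (div_pos hax hbx).ne').div_const
    (a - b)).congr_deriv ?_
  have := sub_ne_zero.mpr hab
  simp only [Pi.div_apply]
  field_simp
  ring

lemma tendsto_log_div_one_add_mul (ha : 0 < a) (hb : 0 < b) :
    Tendsto (fun x => Real.log ((1 + a * x) / (1 + b * x)) / (a - b)) atTop
      (𝓝 (Real.log (a / b) / (a - b))) :=
  ((tendsto_one_add_mul_div_one_add_mul hb.ne').log (div_pos ha hb).ne').div_const _

lemma integrableOn_Ioi_one_div_one_add_mul_mul (ha : 0 < a) (hb : 0 < b) :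
    IntegrableOn (fun x => 1 / ((1 + a * x) * (1 + b * x))) (Ioi 0) := by
  have hm : 0 < min a b := lt_min ha hb
  have hbound : IntegrableOn
      (fun x => 1 / ((1 + min a b * x) * (1 + min a b / 2 * x))) (Ioi 0) :=
    integrableOn_Ioi_deriv_of_nonneg'
      (fun _ hx => hasDerivAt_log_div_one_add_mul hm.le (by positivity) (by linarith) hx)
      (fun x hx => by have : 0 < x := hx; positivity)
      (tendsto_log_div_one_add_mul hm (by positivity))
  refine hbound.mono' (by fun_prop : Measurable _).aestronglyMeasurable ?_
  filter_upwards [ae_restrict_mem measurableSet_Ioi] with x (hx : 0 < x)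
  rw [Real.norm_of_nonneg (by positivity)]
  have : min a b / 2 ≤ b := by linarith [min_le_right a b]
  gcongr
  exact min_le_left a b

theorem integral_Ioi_one_div_one_add_mul_mul (ha : 0 < a) (hb : 0 < b) (hab : a ≠ b) :
    ∫ x in Ioi 0, 1 / ((1 + a * x) * (1 + b * x)) = Real.log (a / b) / (a - b) := by
  rw [integral_Ioi_of_hasDerivAt_of_nonneg'
    (fun _ hx => hasDerivAt_log_div_one_add_mul ha.le hb.le hab hx)
    (fun x hx => by have : 0 < x := hx; positivity) (tendsto_log_div_one_add_mul ha hb)]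
  simp only [mul_zero, add_zero, div_one, Real.log_one, zero_div, sub_zero]

end TwoFactor

section ThreeFactor

variable {a b c : ℝ}

lemma one_div_mul_mul_eq_div (hbc : b ≠ c) {x : ℝ} (hax : 1 + a * x ≠ 0) (hbx : 1 + b * x ≠ 0)
    (hcx : 1 + c * x ≠ 0) :
    1 / ((1 + a * x) * (1 + b * x) * (1 + c * x)) =
      (b * (1 / ((1 + a * x) * (1 + b * x))) - c * (1 / ((1 + a * x) * (1 + c * x)))) /
        (b - c) := by
  have := sub_ne_zero.mpr hbc
  rw [mul_one_div, mul_one_div, div_sub_div _ _ (mul_ne_zero hax hbx) (mul_ne_zero hax hcx),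
    div_div, div_eq_div_iff (by positivity) (by positivity)]
  ring

lemma integrableOn_Ioi_one_div_one_add_mul_mul_mul (ha : 0 < a) (hb : 0 < b) (hc : 0 < c) :
    IntegrableOn (fun x => 1 / ((1 + a * x) * (1 + b * x) * (1 + c * x))) (Ioi 0) := by
  refine (integrableOn_Ioi_one_div_one_add_mul_mul ha hb).mono'
    (by fun_prop : Measurable _).aestronglyMeasurable ?_
  filter_upwards [ae_restrict_mem measurableSet_Ioi] with x (hx : 0 < x)
  rw [Real.norm_of_nonneg (by positivity)]
  exact div_le_div_of_nonneg_left zero_le_one (by positivity)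
    (le_mul_of_one_le_right (by positivity) (by nlinarith))

theorem integral_Ioi_one_div_one_add_mul_mul_mul (ha : 0 < a) (hb : 0 < b) (hc : 0 < c)
    (hab : a ≠ b) (hac : a ≠ c) (hbc : b ≠ c) :
    ∫ x in Ioi 0, 1 / ((1 + a * x) * (1 + b * x) * (1 + c * x)) =
      (b * (Real.log (a / b) / (a - b)) - c * (Real.log (a / c) / (a - c))) / (b - c) := by
  rw [setIntegral_congr_fun measurableSet_Ioi fun x (hx : 0 < x) =>
      one_div_mul_mul_eq_div hbc (by positivity) (by positivity) (by positivity), integral_div,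
    integral_sub ((integrableOn_Ioi_one_div_one_add_mul_mul ha hb).const_mul b)
      ((integrableOn_Ioi_one_div_one_add_mul_mul ha hc).const_mul c),
    integral_const_mul, integral_const_mul, integral_Ioi_one_div_one_add_mul_mul ha hb hab,
    integral_Ioi_one_div_one_add_mul_mul ha hc hac]

end ThreeFactor

theorem Int.sum_Icc_neg_one_pow_pred_mul_choose {n : ℕ} (hn : n ≠ 0) :
    ∑ k ∈ Finset.Icc 1 n, (-1 : ℤ) ^ (k - 1) * n.choose k = 1 := by
  have h := Int.alternating_sum_range_choose_of_ne hn
  rw [Finset.sum_range_succ'] at h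
  rw [← Finset.Ico_add_one_right_eq_Icc, Finset.sum_Ico_eq_sum_range, add_tsub_cancel_right]
  simp only [pow_succ, mul_neg_one, neg_mul, Finset.sum_neg_distrib, pow_zero,
    Nat.choose_zero_right, Nat.cast_one, mul_one] at h
  simp only [add_comm 1, add_tsub_cancel_right]
  linarith

theorem sum_Icc_neg_one_pow_pred_mul_choose {R : Type*} [Ring R] {n : ℕ} (hn : n ≠ 0) :
    ∑ k ∈ Finset.Icc 1 n, (-1 : R) ^ (k - 1) * n.choose k = 1 := by
  exact_mod_cast congrArg (Int.cast : ℤ → R) (Int.sum_Icc_neg_one_pow_pred_mul_choose hn)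

theorem neg_one_pow_add_eq_mul_pred {R : Type*} [Monoid R] [HasDistribNeg R] {k j : ℕ}
    (hk : 1 ≤ k) (hj : 1 ≤ j) :
    (-1 : R) ^ (k + j) = (-1) ^ (k - 1) * (-1) ^ (j - 1) := by
  obtain ⟨k, rfl⟩ := Nat.exists_eq_add_of_le' hk
  obtain ⟨j, rfl⟩ := Nat.exists_eq_add_of_le' hj
  rw [Nat.add_sub_cancel, Nat.add_sub_cancel, show k + 1 + (j + 1) = k + j + 2 by ring, pow_add,
    pow_add]
  simp

lemma sum_Icc_sum_Icc_neg_one_pow_add_mul {R : Type*} [CommRing R] (m n : ℕ) (a b : ℕ → R)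
    (f : ℕ → ℕ → R) :
    ∑ k ∈ Finset.Icc 1 m, ∑ j ∈ Finset.Icc 1 n, (-1 : R) ^ (k + j) * a k * b j * f k j =
      ∑ k ∈ Finset.Icc 1 m, ∑ j ∈ Finset.Icc 1 n,
        (-1) ^ (k - 1) * a k * ((-1) ^ (j - 1) * b j) * f k j :=
  Finset.sum_congr rfl fun k hk => Finset.sum_congr rfl fun j hj => by
    rw [neg_one_pow_add_eq_mul_pred (Finset.mem_Icc.mp hk).1 (Finset.mem_Icc.mp hj).1]
    ring

lemma one_sub_sum_sub_sum_add_sum_sum {ι κ R : Type*} [CommRing R] {s : Finset ι}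
    {t : Finset κ} {c : ι → R} {d : κ → R} (hc : ∑ i ∈ s, c i = 1) (hd : ∑ j ∈ t, d j = 1)
    (u : ι → R) (v : κ → R) :
    1 - ∑ i ∈ s, c i * u i - ∑ j ∈ t, d j * v j + ∑ i ∈ s, ∑ j ∈ t, c i * d j * (u i * v j) =
      ∑ i ∈ s, ∑ j ∈ t, c i * d j * ((1 - u i) * (1 - v j)) := by
  calc _ = (1 - ∑ i ∈ s, c i * u i) * (1 - ∑ j ∈ t, d j * v j) := by
        have hcross : ∑ i ∈ s, ∑ j ∈ t, c i * d j * (u i * v j) =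
            (∑ i ∈ s, c i * u i) * ∑ j ∈ t, d j * v j := by
          simp only [Finset.sum_mul_sum, mul_mul_mul_comm]
        rw [hcross]
        ring
    _ = (∑ i ∈ s, c i * (1 - u i)) * (∑ j ∈ t, d j * (1 - v j)) := by
        simp only [mul_sub, mul_one, Finset.sum_sub_distrib, hc, hd]
    _ = _ := by
        rw [Finset.sum_mul_sum]
        simp only [mul_mul_mul_comm]

lemma sum_sum_mul_mul_add_add {ι κ R : Type*} [CommSemiring R] {s : Finset ι} {t : Finset κ}
    {c : ι → R} {d : κ → R} (hc : ∑ i ∈ s, c i = 1) (hd : ∑ j ∈ t, d j = 1)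
    (A : ι → R) (B : κ → R) (C : ι → κ → R) :
    ∑ i ∈ s, ∑ j ∈ t, c i * d j * (A i + B j + C i j) =
      ∑ i ∈ s, c i * A i + ∑ j ∈ t, d j * B j + ∑ i ∈ s, ∑ j ∈ t, c i * d j * C i j := by
  have hA : ∑ i ∈ s, ∑ j ∈ t, c i * d j * A i = ∑ i ∈ s, c i * A i :=
    Finset.sum_congr rfl fun i _ => by rw [← Finset.sum_mul, ← Finset.mul_sum, hd, mul_one]
  have hB : ∑ i ∈ s, ∑ j ∈ t, c i * d j * B j = ∑ j ∈ t, d j * B j := by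
    rw [Finset.sum_comm]
    exact Finset.sum_congr rfl fun j _ => by rw [← Finset.sum_mul, ← Finset.sum_mul, hc, one_mul]
  simp only [mul_add, Finset.sum_add_distrib, hA, hB]

theorem integral_sum_sum_mul {X ι κ 𝕜 : Type*} [MeasurableSpace X] [RCLike 𝕜] {μ : Measure X}
    {s : Finset ι} {t : Finset κ} (w : ι → κ → 𝕜) {f : ι → κ → X → 𝕜}
    (hf : ∀ i ∈ s, ∀ j ∈ t, Integrable (f i j) μ) :
    ∫ x, ∑ i ∈ s, ∑ j ∈ t, w i j * f i j x ∂μ = ∑ i ∈ s, ∑ j ∈ t, w i j * ∫ x, f i j x ∂μ := by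
  rw [integral_finsetSum _ fun i hi =>
    integrable_finsetSum _ fun j hj => (hf i hi j hj).const_mul _]
  refine Finset.sum_congr rfl fun i hi => ?_
  rw [integral_finsetSum _ fun j hj => (hf i hi j hj).const_mul _]
  exact Finset.sum_congr rfl fun j _ => integral_const_mul _ _

noncomputable def survivalSC (Nr Nd : ℕ) (Ωsr Ωrd Ωsp Ωrp a₂ x : ℝ) : ℝ :=
  1 - (∑ k ∈ Finset.Icc 1 Nr, (-1 : ℝ) ^ (k - 1) * (Nr.choose k : ℝ) *
        ((k : ℝ) * Ωsp * x / (a₂ * Ωsr + (k : ℝ) * Ωsp * x)))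
    - (∑ j ∈ Finset.Icc 1 Nd, (-1 : ℝ) ^ (j - 1) * (Nd.choose j : ℝ) *
        ((j : ℝ) * Ωrp * x / (Ωrd + (j : ℝ) * Ωrp * x)))
    + ∑ k ∈ Finset.Icc 1 Nr, ∑ j ∈ Finset.Icc 1 Nd,
        (-1 : ℝ) ^ (k + j) * (Nr.choose k : ℝ) * (Nd.choose j : ℝ) *
          ((k : ℝ) * (j : ℝ) * Ωsp * Ωrp * x ^ 2 /
            ((a₂ * Ωsr + (k : ℝ) * Ωsp * x) * (Ωrd + (j : ℝ) * Ωrp * x)))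

lemma one_sub_mul_div_add_mul_eq {v t x : ℝ} (hv : v ≠ 0) (hvt : v + t * x ≠ 0) :
    1 - t * x / (v + t * x) = 1 / (1 + t / v * x) := by
  field_simp
  ring

lemma survivalSC_div_eq {Nr Nd : ℕ} (hNr : 1 ≤ Nr) (hNd : 1 ≤ Nd) {Q Ωsr Ωrd Ωsp Ωrp a₂ x : ℝ}
    (hΩsr : 0 < Ωsr) (hΩrd : 0 < Ωrd) (hΩsp : 0 ≤ Ωsp) (hΩrp : 0 ≤ Ωrp) (ha₂ : 0 < a₂)
    (hx : 0 ≤ x) :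
    survivalSC Nr Nd Ωsr Ωrd Ωsp Ωrp a₂ x / (1 + Q * x) =
      ∑ k ∈ Finset.Icc 1 Nr, ∑ j ∈ Finset.Icc 1 Nd,
        (-1 : ℝ) ^ (k - 1) * (Nr.choose k : ℝ) * ((-1 : ℝ) ^ (j - 1) * (Nd.choose j : ℝ)) *
          (1 / ((1 + Q * x) * (1 + k * Ωsp / (a₂ * Ωsr) * x) * (1 + j * Ωrp / Ωrd * x))) := by
  have hcross : ∀ k j : ℕ, (k : ℝ) * (j : ℝ) * Ωsp * Ωrp * x ^ 2 /
      ((a₂ * Ωsr + (k : ℝ) * Ωsp * x) * (Ωrd + (j : ℝ) * Ωrp * x)) =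
        (k : ℝ) * Ωsp * x / (a₂ * Ωsr + (k : ℝ) * Ωsp * x) *
          ((j : ℝ) * Ωrp * x / (Ωrd + (j : ℝ) * Ωrp * x)) := fun k j => by
    rw [div_mul_div_comm]
    ring
  rw [survivalSC, sum_Icc_sum_Icc_neg_one_pow_add_mul]
  simp only [hcross]
  rw [one_sub_sum_sub_sum_add_sum_sum (sum_Icc_neg_one_pow_pred_mul_choose (by omega))
      (sum_Icc_neg_one_pow_pred_mul_choose (by omega)), Finset.sum_div]
  refine Finset.sum_congr rfl fun k _ => ?_
  rw [Finset.sum_div]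
  refine Finset.sum_congr rfl fun j _ => ?_
  rw [one_sub_mul_div_add_mul_eq (by positivity) (by positivity),
    one_sub_mul_div_add_mul_eq (by positivity) (by positivity)]
  simp only [one_div, mul_inv]
  ring

lemma inv_log_two_mul_integral_Ioi_eq {Q Ωsr Ωrd Ωsp Ωrp a₂ k j : ℝ}
    (hQ : 0 < Q) (hΩsr : 0 < Ωsr) (hΩrd : 0 < Ωrd) (hΩsp : 0 < Ωsp) (hΩrp : 0 < Ωrp)
    (ha₂ : 0 < a₂) (hk : 0 < k) (hj : 0 < j)
    (h1 : a₂ * Ωsr * Q ≠ k * Ωsp) (h2 : Ωrd * Q ≠ j * Ωrp)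
    (h3 : k * Ωrd * Ωsp ≠ j * a₂ * Ωrp * Ωsr) :
    1 / Real.log 2 * ∫ x in Ioi 0,
        1 / ((1 + Q * x) * (1 + k * Ωsp / (a₂ * Ωsr) * x) * (1 + j * Ωrp / Ωrd * x))
      = a₂ * Ωsr * (Real.log (a₂ * Ωsr * Q / (k * Ωsp)) / Real.log 2) / (a₂ * Ωsr * Q - k * Ωsp)
        + Ωrd * (Real.log (Ωrd * Q / (j * Ωrp)) / Real.log 2) / (Ωrd * Q - j * Ωrp)
        + (k * Ωrd ^ 2 * Ωsp * (Real.log (j * Ωrp / (Q * Ωrd)) / Real.log 2) /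
              ((k * Ωrd * Ωsp - j * a₂ * Ωrp * Ωsr) * (Q * Ωrd - j * Ωrp))
          + j * a₂ ^ 2 * Ωrp * Ωsr ^ 2 * (Real.log (a₂ * Q * Ωsr / (k * Ωsp)) / Real.log 2) /
              ((k * Ωrd * Ωsp - j * a₂ * Ωrp * Ωsr) * (a₂ * Q * Ωsr - k * Ωsp))) := by
  have hQp : Q ≠ k * Ωsp / (a₂ * Ωsr) := by
    rw [ne_eq, eq_div_iff (by positivity)]
    contrapose! h1
    linear_combination h1
  have hQq : Q ≠ j * Ωrp / Ωrd := by
    rw [ne_eq, eq_div_iff (by positivity)]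
    contrapose! h2
    linear_combination h2
  have hpq : k * Ωsp / (a₂ * Ωsr) ≠ j * Ωrp / Ωrd := by
    rw [ne_eq, div_eq_div_iff (by positivity) (by positivity)]
    contrapose! h3
    linear_combination h3
  rw [integral_Ioi_one_div_one_add_mul_mul_mul hQ (by positivity) (by positivity) hQp hQq hpq]
  -- every logarithm on the right is `± log (Q / p)` or `± log (Q / q)`
  have e1 : a₂ * Ωsr * Q / (k * Ωsp) = Q / (k * Ωsp / (a₂ * Ωsr)) := by field_simp
  have e2 : a₂ * Q * Ωsr / (k * Ωsp) = Q / (k * Ωsp / (a₂ * Ωsr)) := by field_simp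
  have e3 : Ωrd * Q / (j * Ωrp) = Q / (j * Ωrp / Ωrd) := by field_simp
  have e4 : j * Ωrp / (Q * Ωrd) = (Q / (j * Ωrp / Ωrd))⁻¹ := by field_simp
  rw [e1, e2, e3, e4, Real.log_inv]
  generalize Real.log (Q / (k * Ωsp / (a₂ * Ωsr))) = X
  generalize Real.log (Q / (j * Ωrp / Ωrd)) = Y
  have hL : Real.log 2 ≠ 0 := (Real.log_pos one_lt_two).ne'
  have d1 : a₂ * Ωsr * Q - k * Ωsp ≠ 0 := sub_ne_zero.mpr h1
  have d2 : Ωrd * Q - j * Ωrp ≠ 0 := sub_ne_zero.mpr h2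
  have d3 : k * Ωrd * Ωsp - j * a₂ * Ωrp * Ωsr ≠ 0 := sub_ne_zero.mpr h3
  have d3' : k * Ωsp * Ωrd - a₂ * Ωsr * j * Ωrp ≠ 0 := fun h => d3 (by linear_combination h)
  field_simp
  ring

theorem crs_noma_rate_s2_SC_general
    (Nr Nd : ℕ) (hNr : 1 ≤ Nr) (hNd : 1 ≤ Nd)
    (Q Ωsr Ωrd Ωsp Ωrp a₂ : ℝ)
    (hQ : 0 < Q) (hΩsr : 0 < Ωsr) (hΩrd : 0 < Ωrd) (hΩsp : 0 < Ωsp) (hΩrp : 0 < Ωrp)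
    (ha₂ : 0 < a₂)
    (h1 : ∀ k ∈ Finset.Icc 1 Nr, a₂ * Ωsr * Q ≠ (k : ℝ) * Ωsp)
    (h2 : ∀ j ∈ Finset.Icc 1 Nd, Ωrd * Q ≠ (j : ℝ) * Ωrp)
    (h3 : ∀ k ∈ Finset.Icc 1 Nr, ∀ j ∈ Finset.Icc 1 Nd,
      (k : ℝ) * Ωrd * Ωsp ≠ (j : ℝ) * a₂ * Ωrp * Ωsr)
    (S : ℝ → ℝ)
    (hS : ∀ x, 0 ≤ x → S x =
      1 - (∑ k ∈ Finset.Icc 1 Nr, (-1 : ℝ) ^ (k - 1) * (Nr.choose k : ℝ) *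
            ((k : ℝ) * Ωsp * x / (a₂ * Ωsr + (k : ℝ) * Ωsp * x)))
        - (∑ j ∈ Finset.Icc 1 Nd, (-1 : ℝ) ^ (j - 1) * (Nd.choose j : ℝ) *
            ((j : ℝ) * Ωrp * x / (Ωrd + (j : ℝ) * Ωrp * x)))
        + ∑ k ∈ Finset.Icc 1 Nr, ∑ j ∈ Finset.Icc 1 Nd,
            (-1 : ℝ) ^ (k + j) * (Nr.choose k : ℝ) * (Nd.choose j : ℝ) *
              ((k : ℝ) * (j : ℝ) * Ωsp * Ωrp * x ^ 2 /
                ((a₂ * Ωsr + (k : ℝ) * Ωsp * x) * (Ωrd + (j : ℝ) * Ωrp * x)))) :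
    (1 / 2) * (1 / Real.log 2) * Q * ∫ x in Ioi (0 : ℝ), S x / (1 + Q * x)
      = (1 / 2) * Q *
          ((∑ k ∈ Finset.Icc 1 Nr, (-1 : ℝ) ^ (k - 1) * (Nr.choose k : ℝ) *
              (a₂ * Ωsr * (Real.log (a₂ * Ωsr * Q / ((k : ℝ) * Ωsp)) / Real.log 2) /
                (a₂ * Ωsr * Q - (k : ℝ) * Ωsp)))
            + (∑ j ∈ Finset.Icc 1 Nd, (-1 : ℝ) ^ (j - 1) * (Nd.choose j : ℝ) *
                (Ωrd * (Real.log (Ωrd * Q / ((j : ℝ) * Ωrp)) / Real.log 2) /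
                  (Ωrd * Q - (j : ℝ) * Ωrp)))
            + ∑ k ∈ Finset.Icc 1 Nr, ∑ j ∈ Finset.Icc 1 Nd,
                (-1 : ℝ) ^ (k + j) * (Nr.choose k : ℝ) * (Nd.choose j : ℝ) *
                  ((k : ℝ) * Ωrd ^ 2 * Ωsp *
                      (Real.log ((j : ℝ) * Ωrp / (Q * Ωrd)) / Real.log 2) /
                      (((k : ℝ) * Ωrd * Ωsp - (j : ℝ) * a₂ * Ωrp * Ωsr) *
                        (Q * Ωrd - (j : ℝ) * Ωrp))
                    + (j : ℝ) * a₂ ^ 2 * Ωrp * Ωsr ^ 2 *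
                        (Real.log (a₂ * Q * Ωsr / ((k : ℝ) * Ωsp)) / Real.log 2) /
                        (((k : ℝ) * Ωrd * Ωsp - (j : ℝ) * a₂ * Ωrp * Ωsr) *
                          (a₂ * Q * Ωsr - (k : ℝ) * Ωsp)))) := by
  have hk_pos : ∀ k ∈ Finset.Icc 1 Nr, (0 : ℝ) < k :=
    fun k hk => Nat.cast_pos.mpr (Finset.mem_Icc.mp hk).1
  have hj_pos : ∀ j ∈ Finset.Icc 1 Nd, (0 : ℝ) < j :=
    fun j hj => Nat.cast_pos.mpr (Finset.mem_Icc.mp hj).1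
  rw [setIntegral_congr_fun measurableSet_Ioi fun x (hx : 0 < x) =>
      (congrArg (· / (1 + Q * x)) (hS x hx.le)).trans
        (survivalSC_div_eq hNr hNd hΩsr hΩrd hΩsp.le hΩrp.le ha₂ hx.le),
    integral_sum_sum_mul _ fun k hk j hj => integrableOn_Ioi_one_div_one_add_mul_mul_mul hQ
      (by have := hk_pos k hk; positivity) (by have := hj_pos j hj; positivity),
    sum_Icc_sum_Icc_neg_one_pow_add_mul,
    ← sum_sum_mul_mul_add_add (sum_Icc_neg_one_pow_pred_mul_choose (by omega))
      (sum_Icc_neg_one_pow_pred_mul_choose (by omega)),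
    mul_right_comm _ (1 / Real.log 2), mul_assoc _ (1 / Real.log 2), Finset.mul_sum]
  congr 1
  refine Finset.sum_congr rfl fun k hk => ?_
  rw [Finset.mul_sum]
  refine Finset.sum_congr rfl fun j hj => ?_
  rw [mul_left_comm, inv_log_two_mul_integral_Ioi_eq hQ hΩsr hΩrd hΩsp hΩrp ha₂ (hk_pos k hk)
    (hj_pos j hj) (h1 k hk) (h2 j hj) (h3 k hk j hj)]

/-- Closed-form average achievable rate for symbol `s₂` with selection combining
(Theorem 4 of the paper). -/
theorem crs_noma_rate_s2_SC
    (Nr Nd : ℕ) (hNr : 1 ≤ Nr) (hNd : 1 ≤ Nd)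
    (Q Ωsr Ωrd Ωsp Ωrp a₂ : ℝ)
    (hQ : 0 < Q) (hΩsr : 0 < Ωsr) (hΩrd : 0 < Ωrd) (hΩsp : 0 < Ωsp) (hΩrp : 0 < Ωrp)
    (ha₂ : 0 < a₂) (ha₂' : a₂ < 1)
    (h1 : ∀ k ∈ Finset.Icc 1 Nr, a₂ * Ωsr * Q ≠ (k : ℝ) * Ωsp)
    (h2 : ∀ j ∈ Finset.Icc 1 Nd, Ωrd * Q ≠ (j : ℝ) * Ωrp)
    (h3 : ∀ k ∈ Finset.Icc 1 Nr, ∀ j ∈ Finset.Icc 1 Nd,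
      (k : ℝ) * Ωrd * Ωsp ≠ (j : ℝ) * a₂ * Ωrp * Ωsr)
    (S : ℝ → ℝ)
    (hS : ∀ x, 0 ≤ x → S x =
      1 - (∑ k ∈ Finset.Icc 1 Nr, (-1 : ℝ) ^ (k - 1) * (Nr.choose k : ℝ) *
            ((k : ℝ) * Ωsp * x / (a₂ * Ωsr + (k : ℝ) * Ωsp * x)))
        - (∑ j ∈ Finset.Icc 1 Nd, (-1 : ℝ) ^ (j - 1) * (Nd.choose j : ℝ) *
            ((j : ℝ) * Ωrp * x / (Ωrd + (j : ℝ) * Ωrp * x)))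
        + ∑ k ∈ Finset.Icc 1 Nr, ∑ j ∈ Finset.Icc 1 Nd,
            (-1 : ℝ) ^ (k + j) * (Nr.choose k : ℝ) * (Nd.choose j : ℝ) *
              ((k : ℝ) * (j : ℝ) * Ωsp * Ωrp * x ^ 2 /
                ((a₂ * Ωsr + (k : ℝ) * Ωsp * x) * (Ωrd + (j : ℝ) * Ωrp * x)))) :
    (1 / 2) * (1 / Real.log 2) * Q * ∫ x in Ioi (0 : ℝ), S x / (1 + Q * x)
      = (1 / 2) * Q *
          ((∑ k ∈ Finset.Icc 1 Nr, (-1 : ℝ) ^ (k - 1) * (Nr.choose k : ℝ) *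
              (a₂ * Ωsr * (Real.log (a₂ * Ωsr * Q / ((k : ℝ) * Ωsp)) / Real.log 2) /
                (a₂ * Ωsr * Q - (k : ℝ) * Ωsp)))
            + (∑ j ∈ Finset.Icc 1 Nd, (-1 : ℝ) ^ (j - 1) * (Nd.choose j : ℝ) *
                (Ωrd * (Real.log (Ωrd * Q / ((j : ℝ) * Ωrp)) / Real.log 2) /
                  (Ωrd * Q - (j : ℝ) * Ωrp)))
            + ∑ k ∈ Finset.Icc 1 Nr, ∑ j ∈ Finset.Icc 1 Nd,
                (-1 : ℝ) ^ (k + j) * (Nr.choose k : ℝ) * (Nd.choose j : ℝ) *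
                  ((k : ℝ) * Ωrd ^ 2 * Ωsp *
                      (Real.log ((j : ℝ) * Ωrp / (Q * Ωrd)) / Real.log 2) /
                      (((k : ℝ) * Ωrd * Ωsp - (j : ℝ) * a₂ * Ωrp * Ωsr) *
                        (Q * Ωrd - (j : ℝ) * Ωrp))
                    + (j : ℝ) * a₂ ^ 2 * Ωrp * Ωsr ^ 2 *
                        (Real.log (a₂ * Q * Ωsr / ((k : ℝ) * Ωsp)) / Real.log 2) /
                        (((k : ℝ) * Ωrd * Ωsp - (j : ℝ) * a₂ * Ωrp * Ωsr) *
                          (a₂ * Q * Ωsr - (k : ℝ) * Ωsp)))) :=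
  crs_noma_rate_s2_SC_general Nr Nd hNr hNd Q Ωsr Ωrd Ωsp Ωrp a₂ hQ hΩsr hΩrd hΩsp hΩrp ha₂ h1 h2 h3
    S hS
end

section
/- Let λ_sr, λ_sd, λ_sp be independent exponential random variables with means Ω_sr > 0, Ω_sd > 0, Ω_sp > 0, set φ = 1/Ω_sr + 1/Ω_sd and X = min{λ_sr, λ_sd}/λ_sp. Let Q > 0, a₁, a₂ > 0 with a₁ + a₂ = 1, let R₁ > 0, ε₁ = 2^{2R₁} − 1, and assume a₁ > ε₁a₂. Then with Θ₁ = ε₁/(Q(a₁ − ε₁a₂)), the outage probability of symbol s₁ satisfies P( (1/2)·log₂(1 + a₁QX/(a₂QX + 1)) < R₁ ) = φΩ_sp Θ₁/(1 + φΩ_sp Θ₁). -/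
/-!
For `x ≥ 0` the rate `(1/2) log₂ (1 + a₁Qx/(a₂Qx + 1))` is increasing in `x`, so the outage event
is `{min λ_sr λ_sd < Θ₁ λ_sp}` up to a null set. The minimum of independent exponentials is
exponential with rate `φ`, and for independent `X ~ Exp r`, `Y ~ Exp s` one has
`P(Y < θX) = P(X > Y/θ) = E[exp(-(r/θ) Y)] = s/(s + r/θ)`, the Laplace transform of `Y`.
-/

open MeasureTheory Set ProbabilityTheory Real

lemma half_logb_two_one_add_lt_iff {γ R : ℝ} (hγ : 0 < 1 + γ) :
    1 / 2 * logb 2 (1 + γ) < R ↔ γ < 2 ^ (2 * R) - 1 := by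
  have hhalf : 1 / 2 * logb 2 (1 + γ) < R ↔ logb 2 (1 + γ) < 2 * R := by
    constructor <;> intro h <;> linarith
  rw [hhalf, logb_lt_iff_lt_rpow one_lt_two hγ, lt_sub_iff_add_lt, add_comm]

lemma sinr_lt_iff {a₁ a₂ Q ε x : ℝ} (hQ : 0 < Q) (hden : 0 < a₂ * Q * x + 1)
    (hcond : ε * a₂ < a₁) :
    a₁ * Q * x / (a₂ * Q * x + 1) < ε ↔ x < ε / (Q * (a₁ - ε * a₂)) := by
  rw [div_lt_iff₀ hden, lt_div_iff₀ (mul_pos hQ (sub_pos.2 hcond))]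
  constructor <;> intro h <;> linarith

namespace ProbabilityTheory

section Exponential

variable {r s : ℝ}

lemma expMeasure_Ioi (hr : 0 < r) (x : ℝ) :
    expMeasure r (Ioi x) = ENNReal.ofReal (rexp (-(r * max x 0))) := by
  have := isProbabilityMeasure_expMeasure hr
  rw [← compl_Iic, prob_compl_eq_one_sub measurableSet_Iic, ← ofReal_cdf, cdf_expMeasure_eq hr]
  rcases le_or_gt 0 x with hx | hx
  · rw [if_pos hx, max_eq_left hx, ← ENNReal.ofReal_one,
      ← ENNReal.ofReal_sub _ (by rw [sub_nonneg, exp_le_one_iff]; nlinarith)]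
    ring_nf
  · simp [if_neg (not_le.2 hx), max_eq_right hx.le]

lemma ae_pos_expMeasure (hr : 0 < r) : ∀ᵐ x ∂expMeasure r, 0 < x := by
  have := isProbabilityMeasure_expMeasure hr
  rw [ae_iff]
  simp only [not_lt]
  change expMeasure r (Iic 0) = 0
  rw [← ofReal_cdf, cdf_expMeasure_eq hr]
  simp

lemma lintegral_exp_neg_mul_expMeasure {a : ℝ} (hs : 0 < s) (hsa : 0 < s + a) :
    ∫⁻ y, ENNReal.ofReal (rexp (-(a * y))) ∂expMeasure s = ENNReal.ofReal (s / (s + a)) := by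
  have hmeas : Measurable fun y : ℝ => ENNReal.ofReal (rexp (-(a * y))) := by fun_prop
  have hpdf : ∀ y, exponentialPDF s y * ENNReal.ofReal (rexp (-(a * y)))
      = ENNReal.ofReal (s / (s + a)) * exponentialPDF (s + a) y := by
    intro y
    rcases lt_or_ge y 0 with hy | hy
    · simp [exponentialPDF_of_neg hy]
    · rw [exponentialPDF_of_nonneg hy, exponentialPDF_of_nonneg hy,
        ← ENNReal.ofReal_mul (by positivity), ← ENNReal.ofReal_mul (by positivity)]
      congr 1
      rw [mul_assoc, ← exp_add]
      field_simp
      ring_nf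
  have hpdf_meas (t : ℝ) : Measurable (exponentialPDF t) :=
    (measurable_exponentialPDFReal t).ennreal_ofReal
  change ∫⁻ y, _ ∂(volume.withDensity (exponentialPDF s)) = _
  rw [lintegral_withDensity_eq_lintegral_mul _ (hpdf_meas s) hmeas]
  simp only [Pi.mul_apply, hpdf]
  rw [lintegral_const_mul _ (hpdf_meas _),
    lintegral_exponentialPDF_eq_one hsa, mul_one]

lemma expMeasure_prod_snd_lt_mul_fst (hr : 0 < r) (hs : 0 < s) {θ : ℝ} (hθ : 0 < θ) :
    (expMeasure r).prod (expMeasure s) {p : ℝ × ℝ | p.2 < θ * p.1}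
      = ENNReal.ofReal (s * θ / (r + s * θ)) := by
  have := isProbabilityMeasure_expMeasure hr
  have := isProbabilityMeasure_expMeasure hs
  have hsection : ∀ᵐ y ∂expMeasure s,
      expMeasure r ((fun x => (x, y)) ⁻¹' {p : ℝ × ℝ | p.2 < θ * p.1})
        = ENNReal.ofReal (rexp (-(r / θ * y))) := by
    filter_upwards [ae_pos_expMeasure hs] with y hy
    have hset : (fun x => (x, y)) ⁻¹' {p : ℝ × ℝ | p.2 < θ * p.1} = Ioi (y / θ) := by
      ext x
      exact (div_lt_iff₀' hθ).symm
    rw [hset, expMeasure_Ioi hr, max_eq_left (by positivity)]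
    ring_nf
  rw [Measure.prod_apply_symm (measurableSet_lt measurable_snd (measurable_fst.const_mul θ)),
    lintegral_congr_ae hsection, lintegral_exp_neg_mul_expMeasure hs (by positivity)]
  congr 1
  field_simp
  ring

end Exponential

section RandomVariables

variable {Ω : Type*} [MeasurableSpace Ω] {P : Measure Ω} {X Y : Ω → ℝ} {r s : ℝ}

lemma ae_pos_of_map_eq_expMeasure (hX : Measurable X) (hr : 0 < r)
    (hXlaw : P.map X = expMeasure r) : ∀ᵐ ω ∂P, 0 < X ω :=
  (ae_map_iff hX.aemeasurable measurableSet_Ioi).1 (hXlaw ▸ ae_pos_expMeasure hr)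

lemma map_min_eq_expMeasure_add [IsProbabilityMeasure P] (hX : Measurable X) (hY : Measurable Y)
    (hXY : IndepFun X Y P) (hr : 0 < r) (hs : 0 < s)
    (hXlaw : P.map X = expMeasure r) (hYlaw : P.map Y = expMeasure s) :
    P.map (fun ω => min (X ω) (Y ω)) = expMeasure (r + s) := by
  have hmin : Measurable fun ω => min (X ω) (Y ω) := hX.min hY
  have := isProbabilityMeasure_expMeasure (add_pos hr hs)
  have := Measure.isProbabilityMeasure_map (μ := P) hmin.aemeasurable
  refine Measure.ext_of_Iic _ _ fun t => ?_
  rw [← compl_Ioi, prob_compl_eq_one_sub measurableSet_Ioi,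
    prob_compl_eq_one_sub measurableSet_Ioi]
  congr 1
  have hpre : (fun ω => min (X ω) (Y ω)) ⁻¹' Ioi t = X ⁻¹' Ioi t ∩ Y ⁻¹' Ioi t := by
    ext ω
    simp only [mem_preimage, mem_Ioi, mem_inter_iff, lt_min_iff]
  rw [Measure.map_apply hmin measurableSet_Ioi, hpre,
    indepFun_iff_measure_inter_preimage_eq_mul.1 hXY _ _ measurableSet_Ioi measurableSet_Ioi,
    ← Measure.map_apply hX measurableSet_Ioi, ← Measure.map_apply hY measurableSet_Ioi,
    hXlaw, hYlaw, expMeasure_Ioi hr, expMeasure_Ioi hs, expMeasure_Ioi (add_pos hr hs),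
    ← ENNReal.ofReal_mul (exp_nonneg _), ← exp_add]
  ring_nf

lemma measure_lt_mul_of_indepFun_expMeasure [IsFiniteMeasure P] (hX : Measurable X)
    (hY : Measurable Y) (hXY : IndepFun X Y P) (hr : 0 < r) (hs : 0 < s)
    (hXlaw : P.map X = expMeasure r) (hYlaw : P.map Y = expMeasure s) {θ : ℝ} (hθ : 0 < θ) :
    P {ω | Y ω < θ * X ω} = ENNReal.ofReal (s * θ / (r + s * θ)) := by
  have hset : MeasurableSet {p : ℝ × ℝ | p.2 < θ * p.1} :=
    measurableSet_lt measurable_snd (measurable_fst.const_mul θ)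
  rw [show {ω | Y ω < θ * X ω} = (fun ω => (X ω, Y ω)) ⁻¹' {p | p.2 < θ * p.1} from rfl,
    ← Measure.map_apply (hX.prodMk hY) hset,
    (indepFun_iff_map_prod_eq_prod_map_map hX.aemeasurable hY.aemeasurable).1 hXY,
    hXlaw, hYlaw, expMeasure_prod_snd_lt_mul_fst hr hs hθ]

end RandomVariables

end ProbabilityTheory

theorem outage_s1_crs_noma_general
    {Ω : Type*} [MeasurableSpace Ω] (P : Measure Ω) [IsProbabilityMeasure P]
    (Lsr Lsd Lsp : Ω → ℝ)
    (hsr : Measurable Lsr) (hsd : Measurable Lsd) (hsp : Measurable Lsp)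
    (Ωsr Ωsd Ωsp φ : ℝ) (hΩsr : 0 < Ωsr) (hΩsd : 0 < Ωsd) (hΩsp : 0 < Ωsp)
    (hφ : φ = 1 / Ωsr + 1 / Ωsd)
    (hInd : iIndepFun ![Lsr, Lsd, Lsp] P)
    (hsrlaw : P.map Lsr = expMeasure (1 / Ωsr))
    (hsdlaw : P.map Lsd = expMeasure (1 / Ωsd))
    (hsplaw : P.map Lsp = expMeasure (1 / Ωsp))
    (Q a₁ a₂ R₁ ε₁ Θ₁ : ℝ)
    (hQ : 0 < Q) (ha₁ : 0 < a₁) (ha₂ : 0 < a₂)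
    (hR₁ : 0 < R₁) (hε₁ : ε₁ = 2 ^ (2 * R₁) - 1) (hcond : ε₁ * a₂ < a₁)
    (hΘ₁ : Θ₁ = ε₁ / (Q * (a₁ - ε₁ * a₂))) :
    P {ω | (1 / 2) *
            (Real.log (1 + a₁ * Q * (min (Lsr ω) (Lsd ω) / Lsp ω) /
              (a₂ * Q * (min (Lsr ω) (Lsd ω) / Lsp ω) + 1)) / Real.log 2) < R₁}
      = ENNReal.ofReal (φ * Ωsp * Θ₁ / (1 + φ * Ωsp * Θ₁)) := by
  have hε₁pos : 0 < ε₁ := by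
    rw [hε₁, sub_pos]
    exact one_lt_rpow one_lt_two (by positivity)
  have hΘ₁pos : 0 < Θ₁ := by
    rw [hΘ₁]
    exact div_pos hε₁pos (mul_pos hQ (by linarith))
  have hmin_law : P.map (fun ω => min (Lsr ω) (Lsd ω)) = expMeasure φ := by
    rw [hφ]
    exact map_min_eq_expMeasure_add hsr hsd (hInd.indepFun (i := 0) (j := 1) (by decide))
      (by positivity) (by positivity) hsrlaw hsdlaw
  have hmin_indep : IndepFun Lsp (fun ω => min (Lsr ω) (Lsd ω)) P := by
    have hpair := hInd.indepFun_prodMk (fun i => by fin_cases i <;> assumption) 0 1 2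
      (by decide) (by decide)
    exact (hpair.comp (measurable_fst.min measurable_snd) measurable_id).symm
  have hevent : {ω | (1 / 2) *
        (Real.log (1 + a₁ * Q * (min (Lsr ω) (Lsd ω) / Lsp ω) /
          (a₂ * Q * (min (Lsr ω) (Lsd ω) / Lsp ω) + 1)) / Real.log 2) < R₁}
      =ᵐ[P] {ω | min (Lsr ω) (Lsd ω) < Θ₁ * Lsp ω} := by
    rw [Filter.eventuallyEq_set]
    filter_upwards [ae_pos_of_map_eq_expMeasure hsr (by positivity) hsrlaw,
      ae_pos_of_map_eq_expMeasure hsd (by positivity) hsdlaw,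
      ae_pos_of_map_eq_expMeasure hsp (by positivity) hsplaw] with ω hr hd hp
    have hx : 0 ≤ min (Lsr ω) (Lsd ω) / Lsp ω := div_nonneg (le_min hr.le hd.le) hp.le
    simp only [log_div_log]
    rw [half_logb_two_one_add_lt_iff (by positivity), ← hε₁,
      sinr_lt_iff hQ (by positivity) hcond, ← hΘ₁, div_lt_iff₀ hp]
  rw [measure_congr hevent, measure_lt_mul_of_indepFun_expMeasure hsp (hsr.min hsd) hmin_indep
    (by positivity) (by rw [hφ]; positivity) hsplaw hmin_law hΘ₁pos]
  congr 1
  field_simp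

/-- Outage probability of symbol `s₁` in CRS-NOMA spectrum sharing:
`P(C_{s₁} < R₁) = φΩ_sp Θ₁/(1 + φΩ_sp Θ₁)` with `Θ₁ = ε₁/(Q(a₁ − ε₁a₂))`. -/
theorem outage_s1_crs_noma
    {Ω : Type*} [MeasurableSpace Ω] (P : Measure Ω) [IsProbabilityMeasure P]
    (Lsr Lsd Lsp : Ω → ℝ)
    (hsr : Measurable Lsr) (hsd : Measurable Lsd) (hsp : Measurable Lsp)
    (Ωsr Ωsd Ωsp φ : ℝ) (hΩsr : 0 < Ωsr) (hΩsd : 0 < Ωsd) (hΩsp : 0 < Ωsp)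
    (hφ : φ = 1 / Ωsr + 1 / Ωsd)
    (hInd : iIndepFun ![Lsr, Lsd, Lsp] P)
    (hsrlaw : P.map Lsr = expMeasure (1 / Ωsr))
    (hsdlaw : P.map Lsd = expMeasure (1 / Ωsd))
    (hsplaw : P.map Lsp = expMeasure (1 / Ωsp))
    (Q a₁ a₂ R₁ ε₁ Θ₁ : ℝ)
    (hQ : 0 < Q) (ha₁ : 0 < a₁) (ha₂ : 0 < a₂) (hsum : a₁ + a₂ = 1)
    (hR₁ : 0 < R₁) (hε₁ : ε₁ = 2 ^ (2 * R₁) - 1) (hcond : ε₁ * a₂ < a₁)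
    (hΘ₁ : Θ₁ = ε₁ / (Q * (a₁ - ε₁ * a₂))) :
    P {ω | (1 / 2) *
            (Real.log (1 + a₁ * Q * (min (Lsr ω) (Lsd ω) / Lsp ω) /
              (a₂ * Q * (min (Lsr ω) (Lsd ω) / Lsp ω) + 1)) / Real.log 2) < R₁}
      = ENNReal.ofReal (φ * Ωsp * Θ₁ / (1 + φ * Ωsp * Θ₁)) :=
  outage_s1_crs_noma_general P Lsr Lsd Lsp hsr hsd hsp Ωsr Ωsd Ωsp φ hΩsr hΩsd hΩsp hφ hInd hsrlaw
    hsdlaw hsplaw Q a₁ a₂ R₁ ε₁ Θ₁ hQ ha₁ ha₂ hR₁ hε₁ hcond hΘ₁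
end
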